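/- arXiv:1509.05268 — 5 statements merged into one kernel-verified Lean document; each statement's English description precedes it below -/
import Mathlib

section
/- Let f : ℝ → ℝ be continuously differentiable with f(x) > 0 and f'(x) > 0 for all x > 0. Suppose r, θ : ℝ → ℝ are twice continuously differentiable, r(t) > 0 for all t ∈ ℝ, and they satisfy the geodesic equations r''(t) = f'(r(t))·θ'(t)² and θ''(t) = −(f'(r(t))/f(r(t)))·r'(t)·θ'(t) for all t ∈ ℝ. If there exists T > 0 such that r(t+T) = r(t) and θ(t+T) = θ(t) for all t, then r and θ are constant functions. (Equivalently, the rotationally symmetric Riemannian metric dr⊗dr + f(r)dθ⊗dθ has no closed geodesics.) -/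
lemma monotone_periodic_const {g : ℝ → ℝ} (hg : Monotone g) {T : ℝ} (hT : 0 < T)
    (hp : ∀ t, g (t + T) = g t) (a b : ℝ) : g a = g b := by
  -- wlog a ≤ b
  have key : ∀ x y : ℝ, x ≤ y → g x = g y := by
    intro x y hxy
    obtain ⟨n, hn⟩ := Archimedean.arch (y - x) hT
    have hper : ∀ n : ℕ, g (x + n * T) = g x := by
      intro n
      induction n with
      | zero => simp
      | succ k ih =>
        have : x + (k + 1 : ℕ) * T = (x + k * T) + T := by push_cast; ring
        rw [this, hp, ih]
    have h1 : g x ≤ g y := hg hxy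
    have h2 : g y ≤ g (x + n * T) := by
      apply hg
      have : (n : ℝ) * T = n • T := by simp
      nlinarith [hn, this ▸ hn]
    rw [hper n] at h2
    linarith
  rcases le_total a b with h | h
  · exact key a b h
  · exact (key b a h).symm

/-- The rotationally symmetric metric `dr⊗dr + f(r)dθ⊗dθ` has no closed geodesics:
if `f` is `C¹` with `f > 0` and `f' > 0` on `(0,∞)`, and `(r, θ)` is a periodic
solution of the geodesic equations with `r > 0`, then `r` and `θ` are constant. -/
theorem no_closed_geodesics_rotationally_symmetric
    (f : ℝ → ℝ) (hf : ContDiff ℝ 1 f)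
    (hfpos : ∀ x > 0, f x > 0) (hf'pos : ∀ x > 0, deriv f x > 0)
    (r θ : ℝ → ℝ) (hr : ContDiff ℝ 2 r) (hθ : ContDiff ℝ 2 θ)
    (hrpos : ∀ t : ℝ, r t > 0)
    (geo_r : ∀ t : ℝ, deriv (deriv r) t = deriv f (r t) * (deriv θ t) ^ 2)
    (geo_θ : ∀ t : ℝ,
      deriv (deriv θ) t = -(deriv f (r t) / f (r t)) * deriv r t * deriv θ t)
    (hper : ∃ T > 0, ∀ t : ℝ, r (t + T) = r t ∧ θ (t + T) = θ t) :
    (∀ s t : ℝ, r s = r t) ∧ (∀ s t : ℝ, θ s = θ t) := by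
  obtain ⟨T, hT, hperiodic⟩ := hper
  have hrdiff : Differentiable ℝ r := hr.differentiable (by norm_num)
  have hθdiff : Differentiable ℝ θ := hθ.differentiable (by norm_num)
  have hr2 : ContDiff ℝ (1+1) r := by norm_num; exact hr
  have hr' : Differentiable ℝ (deriv r) :=
    ((contDiff_succ_iff_deriv.mp hr2).2.2.differentiable (by norm_num))
  -- deriv r is monotone
  have hmono : Monotone (deriv r) := by
    apply monotone_of_deriv_nonneg hr'
    intro t
    rw [geo_r t]
    have := hf'pos (r t) (hrpos t)
    positivity
  -- deriv r is periodic
  have hrper : ∀ t, deriv r (t + T) = deriv r t := by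
    intro t
    have : deriv (fun s => r (s + T)) t = deriv r t := by
      congr 1
      ext s
      exact (hperiodic s).1
    rw [← this]
    rw [deriv_comp_add_const]
  have hconst' : ∀ a b : ℝ, deriv r a = deriv r b :=
    monotone_periodic_const hmono hT hrper
  -- deriv r = deriv r 0 constant, hence r t = r 0 + c t; periodicity forces c = 0
  set c := deriv r 0 with hc
  have hderiv : ∀ t, deriv r t = c := fun t => hconst' t 0
  have hlin : ∀ t : ℝ, r t - c * t = r 0 := by
    intro t
    have : ∀ x, deriv (fun s => r s - c * s) x = 0 := by
      intro x
      have h1 : HasDerivAt (fun s => r s - c * s) (deriv r x - c) x := by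
        exact ((hrdiff x).hasDerivAt.sub ((hasDerivAt_id' x).const_mul c)).congr_deriv (by ring)
      rw [h1.deriv, hderiv]
      ring
    have := is_const_of_deriv_eq_zero (f := fun s => r s - c * s)
      (by fun_prop) this t 0
    simpa using this
  have hc0 : c = 0 := by
    have h1 := hlin T
    have h2 := hlin 0
    have h3 := (hperiodic 0).1
    rw [zero_add] at h3
    rw [h3] at h1
    have : c * T = 0 := by linarith
    rcases mul_eq_zero.mp this with h | h
    · exact h
    · linarith
  have hrconst : ∀ s t : ℝ, r s = r t := by
    intro s t
    exact is_const_of_deriv_eq_zero hrdiff (fun x => hc0 ▸ hderiv x) s t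
  refine ⟨hrconst, ?_⟩
  -- deriv r = 0 everywhere, so deriv (deriv r) = 0, so θ' = 0
  have hdd : ∀ t, deriv (deriv r) t = 0 := by
    intro t
    have : deriv r = fun _ => (0 : ℝ) := funext fun x => hc0 ▸ hderiv x
    rw [this]
    simp
  have hθ' : ∀ t, deriv θ t = 0 := by
    intro t
    have h := (geo_r t).symm.trans (hdd t)
    have hpos := hf'pos (r t) (hrpos t)
    have : (deriv θ t) ^ 2 = 0 := by
      by_contra hne
      have : (deriv θ t) ^ 2 > 0 := lt_of_le_of_ne (sq_nonneg _) (Ne.symm hne)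
      nlinarith
    exact pow_eq_zero_iff (by norm_num) |>.mp this
  intro s t
  exact is_const_of_deriv_eq_zero hθdiff hθ' s t
end

section
/- Let f : ℝ → ℝ be continuously differentiable, and let r, θ : ℝ → ℝ be twice continuously differentiable with f(r(t)) > 0 for all t ∈ ℝ, satisfying the geodesic equations r''(t) = f'(r(t))·θ'(t)² and θ''(t) = −(f'(r(t))/f(r(t)))·r'(t)·θ'(t) for all t ∈ ℝ. If θ'(t₀) = 0 for some t₀ ∈ ℝ, then θ'(t) = 0 for all t ∈ ℝ and r' is a constant function (the geodesic is a radial line). -/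
/-- First case in the proof that the rotationally symmetric metric
`dr⊗dr + f(r)dθ⊗dθ` has no closed geodesics: if at some time `θ' = 0`, then
`θ'` vanishes identically and `r'` is constant (the geodesic is a radial line). -/
theorem radial_geodesics
    (f : ℝ → ℝ) (hf : ContDiff ℝ 1 f)
    (r θ : ℝ → ℝ) (hr : ContDiff ℝ 2 r) (hθ : ContDiff ℝ 2 θ)
    (hfr : ∀ t : ℝ, f (r t) > 0)
    (geo_r : ∀ t : ℝ, deriv (deriv r) t = deriv f (r t) * (deriv θ t) ^ 2)
    (geo_θ : ∀ t : ℝ,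
      deriv (deriv θ) t = -(deriv f (r t) / f (r t)) * deriv r t * deriv θ t)
    (t₀ : ℝ) (ht₀ : deriv θ t₀ = 0) :
    (∀ t : ℝ, deriv θ t = 0) ∧ (∀ s t : ℝ, deriv r s = deriv r t) := by
  have hr2 : ContDiff ℝ (1 + 1) r := by norm_num at hr ⊢; exact hr
  have hθ2 : ContDiff ℝ (1 + 1) θ := by norm_num at hθ ⊢; exact hθ
  have hr1 : Differentiable ℝ r := (contDiff_succ_iff_deriv.mp hr2).1
  have hθ1 : Differentiable ℝ θ := (contDiff_succ_iff_deriv.mp hθ2).1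
  have hdr : Differentiable ℝ (deriv r) :=
    ((contDiff_succ_iff_deriv.mp hr2).2.2).differentiable one_ne_zero
  have hdθ : Differentiable ℝ (deriv θ) :=
    ((contDiff_succ_iff_deriv.mp hθ2).2.2).differentiable one_ne_zero
  have hfd : Differentiable ℝ f := hf.differentiable one_ne_zero
  -- The Clairaut first integral F = f(r)·θ'
  set F : ℝ → ℝ := fun t => f (r t) * deriv θ t with hF
  have hFderiv : ∀ t, HasDerivAt F 0 t := by
    intro t
    have h1 : HasDerivAt (fun t => f (r t)) (deriv f (r t) * deriv r t) t :=
      ((hfd (r t)).hasDerivAt).comp t (hr1 t).hasDerivAt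
    have h2 : HasDerivAt (deriv θ) (deriv (deriv θ) t) t := (hdθ t).hasDerivAt
    have h := h1.mul h2
    have hne : f (r t) ≠ 0 := ne_of_gt (hfr t)
    have : deriv f (r t) * deriv r t * deriv θ t +
        f (r t) * deriv (deriv θ) t = 0 := by
      rw [geo_θ t]; field_simp; ring
    rwa [this] at h
  have hFconst : ∀ t, F t = F t₀ := by
    intro t
    have := is_const_of_deriv_eq_zero (f := F)
      (fun x => (hFderiv x).differentiableAt)
      (fun x => (hFderiv x).deriv) t t₀
    exact this
  have hθ0 : ∀ t, deriv θ t = 0 := by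
    intro t
    have h := hFconst t
    simp only [hF, ht₀, mul_zero] at h
    exact (mul_eq_zero.mp h).resolve_left (ne_of_gt (hfr t))
  refine ⟨hθ0, ?_⟩
  intro s t
  have := is_const_of_deriv_eq_zero (f := deriv r) hdr
    (fun x => by
      rw [geo_r x, hθ0 x]; ring) s t
  exact this
end

section
/- Let δ be a real number with 0 < δ < π/2. Let f : ℝ → ℝ be differentiable with f'(z) < 0 for every z ∈ ℝ, and let φ : ℝ → ℝ be differentiable with φ(x) = 0 for all x ≤ δ and φ(x) > 0 for all x > δ. Then there do not exist T > 0 and differentiable functions r, z, θ : ℝ → ℝ with r(t) > 0 for all t, with r and z both T-periodic, satisfying for all t ∈ ℝ: r'(t) = −f'(z(t))·φ(r(t)), z'(t) = sin(r(t)) + r(t)·cos(r(t)) + φ'(r(t))·f(z(t)), and θ'(t) = sin(r(t)). -/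
open Real

/-- The Reeb-like vector field of the perturbed overtwisted-at-infinity contact
form on `ℝ³` has no periodic orbits away from the `z`-axis: there is no `T`-periodic
solution `(r, z, θ)` with `r > 0` of the system
`r' = −f'(z)·φ(r)`, `z' = sin r + r·cos r + φ'(r)·f(z)`, `θ' = sin r`. -/
theorem no_closed_reeb_orbits_R3_ot
    (δ : ℝ) (hδ0 : 0 < δ) (hδπ : δ < π / 2)
    (f : ℝ → ℝ) (hf : Differentiable ℝ f) (hf' : ∀ z : ℝ, deriv f z < 0)
    (φ : ℝ → ℝ) (hφ : Differentiable ℝ φ)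
    (hφ0 : ∀ x ≤ δ, φ x = 0) (hφpos : ∀ x > δ, φ x > 0) :
    ¬ ∃ (T : ℝ) (r z θ : ℝ → ℝ),
        T > 0 ∧
        Differentiable ℝ r ∧ Differentiable ℝ z ∧ Differentiable ℝ θ ∧
        (∀ t : ℝ, r t > 0) ∧
        (∀ t : ℝ, r (t + T) = r t) ∧ (∀ t : ℝ, z (t + T) = z t) ∧
        (∀ t : ℝ, deriv r t = -(deriv f (z t)) * φ (r t)) ∧
        (∀ t : ℝ, deriv z t =
          Real.sin (r t) + r t * Real.cos (r t) + deriv φ (r t) * f (z t)) ∧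
        (∀ t : ℝ, deriv θ t = Real.sin (r t)) := by
  rintro ⟨T, r, z, θ, hT, hr, hz, hθ, hrpos, hrT, hzT, hr', hz', hθ'⟩
  -- φ is nonnegative
  have hφnn : ∀ x, 0 ≤ φ x := by
    intro x
    rcases le_or_gt x δ with h | h
    · rw [hφ0 x h]
    · exact le_of_lt (hφpos x h)
  -- r' ≥ 0, so r is monotone
  have hr'nn : ∀ t, 0 ≤ deriv r t := by
    intro t
    rw [hr' t]
    have h1 : 0 < -(deriv f (z t)) := by linarith [hf' (z t)]
    exact mul_nonneg h1.le (hφnn (r t))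
  have hmono : Monotone r := monotone_of_deriv_nonneg hr hr'nn
  -- r is periodic and monotone, hence constant
  have hper : Function.Periodic r T := hrT
  have hkey : ∀ a b : ℝ, a ≤ b → r b = r a := by
    intro a b hab
    obtain ⟨n, hn⟩ := exists_nat_ge ((b - a) / T)
    have hb : b ≤ a + n * T := by
      have := (div_le_iff₀ hT).mp hn
      linarith
    have hp : r (a + n * T) = r a := (hper.nat_mul n) a
    exact le_antisymm (hp ▸ hmono hb) (hmono hab)
  have hconst : ∀ t, r t = r 0 := by
    intro t
    rcases le_total t 0 with h | h
    · exact (hkey t 0 h).symm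
    · exact hkey 0 t h
  set c := r 0 with hc
  have hrfun : r = fun _ => c := funext hconst
  have hderiv0 : ∀ t, deriv r t = 0 := by
    intro t
    rw [hrfun]
    simp
  -- φ(c) = 0
  have hφc : φ c = 0 := by
    have h := hr' 0
    rw [hderiv0 0] at h
    have h1 : 0 < -(deriv f (z 0)) := by linarith [hf' (z 0)]
    have := (mul_eq_zero.mp h.symm)
    rcases this with h2 | h2
    · exact absurd h2 (ne_of_gt h1)
    · simpa [hc] using h2
  have hcpos : 0 < c := hrpos 0
  have hcle : c ≤ δ := by
    by_contra hcon
    push_neg at hcon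
    exact absurd hφc (ne_of_gt (hφpos c hcon))
  -- c is a global minimum of φ, so φ'(c) = 0
  have hmin : IsLocalMin φ c := by
    apply IsMinOn.isLocalMin (s := Set.univ)
    · intro x _
      simp only [Set.mem_setOf_eq, hφc]
      exact hφnn x
    · exact Filter.univ_mem
  have hφ'c : deriv φ c = 0 := hmin.deriv_eq_zero
  -- z' is a positive constant
  have hsin : 0 < Real.sin c := Real.sin_pos_of_pos_of_lt_pi hcpos
    (by linarith [Real.pi_pos])
  have hcos : 0 < Real.cos c := Real.cos_pos_of_mem_Ioo
    ⟨by linarith [Real.pi_pos], by linarith⟩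
  have hz'pos : ∀ t, 0 < deriv z t := by
    intro t
    rw [hz' t, hconst t, hφ'c]
    have : 0 < c * Real.cos c := mul_pos hcpos hcos
    simp only [zero_mul]
    linarith
  have hzmono : StrictMono z := strictMono_of_deriv_pos hz'pos
  have : z 0 < z (0 + T) := hzmono (by linarith)
  rw [hzT 0] at this
  exact lt_irrefl _ this
end

section
/- Define g : ℝ → ℝ by g(z) = (z−2π)·sin(z) + z·sin(z) + z·(z−2π)·cos(z). Let f : ℝ → ℝ be differentiable with f'(s) > 0 for all s ∈ ℝ, and let φ : ℝ → ℝ be differentiable with φ(z) ≥ 0 for all z, such that for every z ∈ (0, 2π) with φ(z) = 0 one has φ'(z) = 0 and g(z) ≠ 0. Then there do not exist T > 0 and differentiable functions z, s : ℝ → ℝ, both T-periodic, with z(t) ∈ (0, 2π) for all t, satisfying for all t ∈ ℝ: z'(t) = −f'(s(t))·φ(z(t)) and s'(t) = g(z(t)) + f(s(t))·φ'(z(t)). -/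
open Real

/-- The Reeb-like vector field of the perturbed contact form on `S² × ℝ` has no
periodic orbits away from the poles: with
`g(z) = (z−2π)·sin z + z·sin z + z·(z−2π)·cos z`, there is no `T`-periodic
solution `(z, s)` with `z(t) ∈ (0, 2π)` of the system
`z' = −f'(s)·φ(z)`, `s' = g(z) + f(s)·φ'(z)`. -/
theorem no_closed_reeb_orbits_S2xR
    (g : ℝ → ℝ)
    (hg : ∀ z : ℝ, g z =
      (z - 2 * π) * Real.sin z + z * Real.sin z + z * (z - 2 * π) * Real.cos z)
    (f : ℝ → ℝ) (hf : Differentiable ℝ f) (hf' : ∀ s : ℝ, deriv f s > 0)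
    (φ : ℝ → ℝ) (hφ : Differentiable ℝ φ) (hφ0 : ∀ z : ℝ, φ z ≥ 0)
    (hφg : ∀ z : ℝ, z ∈ Set.Ioo (0 : ℝ) (2 * π) → φ z = 0 →
      deriv φ z = 0 ∧ g z ≠ 0) :
    ¬ ∃ (T : ℝ) (z s : ℝ → ℝ),
        T > 0 ∧
        Differentiable ℝ z ∧ Differentiable ℝ s ∧
        (∀ t : ℝ, z (t + T) = z t) ∧ (∀ t : ℝ, s (t + T) = s t) ∧
        (∀ t : ℝ, z t ∈ Set.Ioo (0 : ℝ) (2 * π)) ∧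
        (∀ t : ℝ, deriv z t = -(deriv f (s t)) * φ (z t)) ∧
        (∀ t : ℝ, deriv s t = g (z t) + f (s t) * deriv φ (z t)) := by
  rintro ⟨T, z, s, hT, hz, hs, hzT, hsT, hzI, hzd, hsd⟩
  -- z is nonincreasing
  have hz'le : ∀ t, deriv z t ≤ 0 := by
    intro t
    rw [hzd t]
    have h1 := (hf' (s t)).le
    have h2 := hφ0 (z t)
    nlinarith
  have hanti : Antitone z := antitone_of_deriv_nonpos hz hz'le
  have hper : Function.Periodic z T := hzT
  -- z is constant
  have hconst0 : ∀ t : ℝ, 0 ≤ t → z t = z 0 := by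
    intro t h0
    obtain ⟨n, hn⟩ := exists_nat_ge (t / T)
    have hnT : t ≤ (n : ℝ) * T := by
      rw [div_le_iff₀ hT] at hn; linarith
    have h1 : z (0 + (n : ℝ) * T) = z 0 := (hper.nat_mul n) 0
    rw [zero_add] at h1
    have h2 := hanti hnT
    have h3 := hanti h0
    linarith
  have hconst : ∀ t : ℝ, z t = z 0 := by
    intro t
    rcases le_or_gt 0 t with h0 | h0
    · exact hconst0 t h0
    · obtain ⟨n, hn⟩ := exists_nat_ge (-t / T)
      have hnT : 0 ≤ t + (n : ℝ) * T := by
        rw [div_le_iff₀ hT] at hn; linarith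
      have h1 : z (t + (n : ℝ) * T) = z t := (hper.nat_mul n) t
      rw [← h1]
      exact hconst0 _ hnT
  set c := z 0 with hc
  have hzero : ∀ t, deriv z t = 0 := by
    intro t
    have hzf : z = fun _ => c := funext hconst
    rw [hzf]; simp
  -- φ c = 0
  have hφc : φ c = 0 := by
    have h0 := hzd 0
    rw [hzero 0, ← hc] at h0
    have hfpos := hf' (s 0)
    rcases mul_eq_zero.mp h0.symm with h | h
    · exact absurd (neg_eq_zero.mp h) (ne_of_gt hfpos)
    · exact h
  obtain ⟨hφ'c, hgc⟩ := hφg c (hc ▸ hzI 0) hφc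
  -- s' = g c everywhere
  have hsd' : ∀ t, deriv s t = g c := by
    intro t
    rw [hsd t, hconst t, hφ'c, mul_zero, add_zero]
  -- the function s t - g c * t is constant
  have hkey : ∀ x y : ℝ, s x - g c * x = s y - g c * y := by
    have hdiff : Differentiable ℝ (fun t => s t - g c * t) := by
      apply hs.sub; exact (differentiable_id.const_mul _)
    have hder : ∀ t, deriv (fun t => s t - g c * t) t = 0 := by
      intro t
      have h1 : HasDerivAt (fun t => s t - g c * t) (deriv s t - g c * 1) t :=
        ((hs t).hasDerivAt).sub ((hasDerivAt_id t).const_mul (g c))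
      rw [h1.deriv, hsd' t]; ring
    exact fun x y => is_const_of_deriv_eq_zero hdiff hder x y
  have h1 : s T - g c * T = s 0 - g c * 0 := hkey T 0
  have h2 : s T = s 0 := by have := hsT 0; rwa [zero_add] at this
  have : g c * T = 0 := by linarith [h1, h2]
  rcases mul_eq_zero.mp this with h | h
  · exact hgc h
  · exact absurd h (ne_of_gt hT)
end

section
/- Let h : ℂ → ℂ be a function that is holomorphic on ℂ ∖ {0} and satisfies h(z) ≠ 0 for all z ≠ 0. Suppose there exist a constant C > 0 and a natural number n such that ‖h(z)‖ ≤ C·‖z‖^(−n) whenever 0 < ‖z‖ ≤ 1, and ‖h(z)‖ ≤ C·‖z‖^n whenever ‖z‖ ≥ 1. Then there exist a ∈ ℂ with a ≠ 0 and an integer k ∈ ℤ such that h(z) = a·z^k for all z ≠ 0. -/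
open Polynomial Complex

-- Lemma A: entire with polynomial growth is polynomial
lemma entire_poly_growth_is_poly (N : ℕ) :
    ∀ (G : ℂ → ℂ), Differentiable ℂ G →
    (∃ A : ℝ, ∀ z : ℂ, 1 ≤ ‖z‖ → ‖G z‖ ≤ A * ‖z‖ ^ N) →
    ∃ p : ℂ[X], ∀ z, G z = p.eval z := by
  induction N with
  | zero =>
    rintro G hG ⟨A, hA⟩
    have hb : Bornology.IsBounded (Set.range G) := by
      obtain ⟨B, hB⟩ := (isCompact_closedBall (0:ℂ) 1).exists_bound_of_continuousOn
        hG.continuous.continuousOn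
      refine (Metric.isBounded_iff_subset_closedBall 0).2 ⟨max A B, ?_⟩
      rintro _ ⟨z, rfl⟩
      simp only [Metric.mem_closedBall, dist_zero_right]
      rcases le_or_gt ‖z‖ 1 with hz | hz
      · exact le_trans (hB z (by simpa [Metric.mem_closedBall, dist_zero_right] using hz))
          (le_max_right _ _)
      · have := hA z hz.le
        simp only [pow_zero, mul_one] at this
        exact this.trans (le_max_left _ _)
    obtain ⟨c, hc⟩ := hG.exists_const_forall_eq_of_bounded hb
    exact ⟨Polynomial.C c, fun z => by simp [hc z]⟩
  | succ N ih =>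
    rintro G hG ⟨A, hA⟩
    have hG' : Differentiable ℂ (dslope G 0) := by
      have := (Complex.differentiableOn_dslope (c := (0:ℂ)) (s := Set.univ)
        Filter.univ_mem).2 hG.differentiableOn
      intro z; exact (this z (Set.mem_univ z)).differentiableAt Filter.univ_mem
    have hbd : ∃ A' : ℝ, ∀ z : ℂ, 1 ≤ ‖z‖ → ‖dslope G 0 z‖ ≤ A' * ‖z‖ ^ N := by
      refine ⟨|A| + ‖G 0‖, fun z hz => ?_⟩
      have hz0 : z ≠ 0 := by intro hzz; rw [hzz] at hz; simp at hz; linarith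
      rw [dslope_of_ne _ hz0, slope_def_field]
      have h1 : ‖(G z - G 0) / (z - 0)‖ = ‖G z - G 0‖ / ‖z‖ := by
        rw [sub_zero, norm_div]
      rw [h1]
      rw [div_le_iff₀ (by positivity : (0:ℝ) < ‖z‖)]
      have h2 : ‖G z - G 0‖ ≤ A * ‖z‖ ^ (N+1) + ‖G 0‖ :=
        (norm_sub_le _ _).trans (add_le_add_left (hA z hz) _)
      have h3 : A * ‖z‖ ^ (N+1) + ‖G 0‖ ≤ (|A| + ‖G 0‖) * ‖z‖ ^ (N+1) := by
        have hp : (1:ℝ) ≤ ‖z‖ ^ (N+1) := one_le_pow₀ hz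
        nlinarith [le_abs_self A, norm_nonneg (G 0), abs_nonneg A]
      calc ‖G z - G 0‖ ≤ (|A| + ‖G 0‖) * ‖z‖ ^ (N+1) := h2.trans h3
        _ = (|A| + ‖G 0‖) * ‖z‖ ^ N * ‖z‖ := by ring
    obtain ⟨p, hp⟩ := ih (dslope G 0) hG' hbd
    refine ⟨Polynomial.X * p + Polynomial.C (G 0), fun z => ?_⟩
    have := sub_smul_dslope G 0 z
    simp only [sub_zero, smul_eq_mul] at this
    rw [eval_add, eval_mul, eval_X, eval_C, ← hp z, this]; ring

-- Lemma B: polynomial nonvanishing off 0 is a monomial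
lemma poly_nonvanishing_monomial (p : ℂ[X]) (hp : p ≠ 0)
    (hnv : ∀ z : ℂ, z ≠ 0 → p.eval z ≠ 0) :
    ∃ (c : ℂ) (m : ℕ), c ≠ 0 ∧ ∀ z, p.eval z = c * z ^ m := by
  obtain ⟨q, hq, hndvd⟩ := p.exists_eq_pow_rootMultiplicity_mul_and_not_dvd hp 0
  simp only [map_zero, sub_zero] at hq hndvd
  have hq0 : q.eval 0 ≠ 0 := by
    intro h0
    apply hndvd
    have : (X - C (0:ℂ)) ∣ q := Polynomial.dvd_iff_isRoot.2 h0
    simpa using this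
  have hqnv : ∀ z : ℂ, q.eval z ≠ 0 := by
    intro z
    rcases eq_or_ne z 0 with rfl | hz
    · exact hq0
    · intro h0
      apply hnv z hz
      rw [hq, eval_mul, h0, mul_zero]
  have hdeg : q.degree ≤ 0 := by
    by_contra hd
    push_neg at hd
    obtain ⟨z, hz⟩ := Complex.exists_root hd
    exact hqnv z hz
  have hc := Polynomial.degree_le_zero_iff.1 hdeg
  refine ⟨q.coeff 0, p.rootMultiplicity 0, ?_, fun z => ?_⟩
  · intro h0; apply hq0; rw [hc, h0]; simp
  · conv_lhs => rw [hq, eval_mul, eval_pow, eval_X, hc, eval_C]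
    ring

/-- A nonvanishing holomorphic function on `ℂ ∖ {0}` that is polynomially
bounded near `0` and near `∞` is of the form `a·z^k` for some `a ≠ 0`, `k ∈ ℤ`. -/
theorem nonvanishing_poly_bounded_eq_monomial
    (h : ℂ → ℂ)
    (hol : ∀ z : ℂ, z ≠ 0 → DifferentiableAt ℂ h z)
    (hne : ∀ z : ℂ, z ≠ 0 → h z ≠ 0)
    (C : ℝ) (hC : C > 0) (n : ℕ)
    (hbound0 : ∀ z : ℂ, 0 < ‖z‖ → ‖z‖ ≤ 1 → ‖h z‖ ≤ C * ‖z‖ ^ (-(n : ℤ)))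
    (hboundInf : ∀ z : ℂ, 1 ≤ ‖z‖ → ‖h z‖ ≤ C * ‖z‖ ^ n) :
    ∃ (a : ℂ) (k : ℤ), a ≠ 0 ∧ ∀ z : ℂ, z ≠ 0 → h z = a * z ^ k := by
  classical
  set f : ℂ → ℂ := fun z => z ^ n * h z with hf
  have hfd : ∀ z : ℂ, z ≠ 0 → DifferentiableAt ℂ f z := fun z hz =>
    (differentiableAt_pow n).mul (hol z hz)
  -- bound on f near 0
  have hfb : ∀ z : ℂ, z ≠ 0 → ‖z‖ ≤ 1 → ‖f z‖ ≤ C := by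
    intro z hz hz1
    have hzp : (0:ℝ) < ‖z‖ := norm_pos_iff.2 hz
    have : ‖f z‖ = ‖z‖ ^ n * ‖h z‖ := by rw [hf]; simp [norm_mul, norm_pow]
    rw [this]
    calc ‖z‖ ^ n * ‖h z‖ ≤ ‖z‖ ^ n * (C * ‖z‖ ^ (-(n:ℤ))) := by
          apply mul_le_mul_of_nonneg_left (hbound0 z hzp hz1) (by positivity)
      _ = C * (‖z‖ ^ (n:ℤ) * ‖z‖ ^ (-(n:ℤ))) := by rw [← zpow_natCast ‖z‖ n]; ring
      _ = C := by rw [← zpow_add₀ (ne_of_gt hzp)]; simp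
  -- G : entire extension of f
  set G : ℂ → ℂ := Function.update f 0 (Filter.limUnder (nhdsWithin 0 {(0:ℂ)}ᶜ) f) with hGdef
  have hGball : DifferentiableOn ℂ G (Metric.ball 0 2) := by
    apply Complex.differentiableOn_update_limUnder_of_bddAbove
      (Metric.ball_mem_nhds 0 two_pos)
    · intro z hz
      exact (hfd z hz.2).differentiableWithinAt
    · refine ⟨max C (C * 2 ^ n * 2 ^ n), ?_⟩
      rintro x ⟨z, ⟨hzb, hz0⟩, rfl⟩
      simp only [Function.comp_apply]
      rcases le_or_gt ‖z‖ 1 with h1 | h1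
      · exact (hfb z hz0 h1).trans (le_max_left _ _)
      · have hz2 : ‖z‖ ≤ 2 := by
          have := Metric.mem_ball.1 hzb
          simp only [dist_zero_right] at this
          linarith
        have : ‖f z‖ = ‖z‖ ^ n * ‖h z‖ := by rw [hf]; simp [norm_mul, norm_pow]
        rw [this]
        refine le_trans ?_ (le_max_right _ _)
        have hb := hboundInf z h1.le
        have h2n : ‖z‖ ^ n ≤ 2 ^ n := pow_le_pow_left₀ (norm_nonneg z) hz2 n
        calc ‖z‖ ^ n * ‖h z‖ ≤ 2 ^ n * (C * ‖z‖ ^ n) := by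
              apply mul_le_mul h2n hb (by positivity) (by positivity)
          _ ≤ 2 ^ n * (C * 2 ^ n) := by
              apply mul_le_mul_of_nonneg_left
                (mul_le_mul_of_nonneg_left h2n hC.le) (by positivity)
          _ = C * 2 ^ n * 2 ^ n := by ring
  have hGeq : ∀ z : ℂ, z ≠ 0 → G z = f z := fun z hz =>
    Function.update_of_ne hz _ _
  have hGdiff : Differentiable ℂ G := by
    intro z
    rcases eq_or_ne z 0 with rfl | hz
    · exact hGball.differentiableAt (Metric.ball_mem_nhds 0 two_pos)
    · apply (hfd z hz).congr_of_eventuallyEq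
      filter_upwards [isOpen_compl_singleton.mem_nhds hz] with w hw
      exact hGeq w hw
  -- growth
  have hGgrow : ∃ A : ℝ, ∀ z : ℂ, 1 ≤ ‖z‖ → ‖G z‖ ≤ A * ‖z‖ ^ (2 * n) := by
    refine ⟨C, fun z hz => ?_⟩
    have hz0 : z ≠ 0 := by intro hzz; rw [hzz] at hz; simp at hz; linarith
    rw [hGeq z hz0]
    have : ‖f z‖ = ‖z‖ ^ n * ‖h z‖ := by rw [hf]; simp [norm_mul, norm_pow]
    rw [this]
    calc ‖z‖ ^ n * ‖h z‖ ≤ ‖z‖ ^ n * (C * ‖z‖ ^ n) := by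
          apply mul_le_mul_of_nonneg_left (hboundInf z hz) (by positivity)
      _ = C * ‖z‖ ^ (2 * n) := by rw [two_mul, pow_add]; ring
  obtain ⟨p, hp⟩ := entire_poly_growth_is_poly (2 * n) G hGdiff hGgrow
  have hpne : p ≠ 0 := by
    intro h0
    have h1 : p.eval 1 = 0 := by rw [h0]; simp
    have h2 : G 1 = f 1 := hGeq 1 one_ne_zero
    have h3 : f 1 = h 1 := by simp [hf]
    exact hne 1 one_ne_zero (by rw [← h3, ← h2, hp 1, h1])
  have hpnv : ∀ z : ℂ, z ≠ 0 → p.eval z ≠ 0 := by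
    intro z hz h0
    apply mul_ne_zero (pow_ne_zero n hz) (hne z hz)
    rw [show z ^ n * h z = f z from rfl, ← hGeq z hz, hp z, h0]
  obtain ⟨c, m, hc, hcm⟩ := poly_nonvanishing_monomial p hpne hpnv
  refine ⟨c, (m : ℤ) - n, hc, fun z hz => ?_⟩
  have key : z ^ n * h z = c * z ^ m := by
    rw [show z ^ n * h z = f z from rfl, ← hGeq z hz, hp z, hcm z]
  have hzn : (z : ℂ) ^ n ≠ 0 := pow_ne_zero _ hz
  apply mul_right_cancel₀ hzn
  rw [mul_comm (h z), key, mul_assoc, ← zpow_natCast z n, ← zpow_add₀ hz,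
    sub_add_cancel, zpow_natCast]
end
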